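/- arXiv:1101.1856 — 2 statements merged into one kernel-verified Lean document; each statement's English description precedes it below -/
import Mathlib

section
/- Let X be a paracompact topological space. If the local covering dimension of X is at most n (every point has a closed neighborhood of covering dimension ≤ n), then the covering dimension of X is at most n. -/
/-!
By paracompactness the closed neighbourhoods `D x` contain a locally finite closed cover
`F t ⊆ D t`. A finite open cover of `X` is shrunk along the `F t` one at a time: on `F t` it is
cut down to a shrinking of order `≤ n + 1` there, which exists because `dim D t ≤ n`, and off
`F t` it is left unchanged. Zorn's lemma runs this transfinite process; local finiteness of `F`
is what keeps the limit stages open.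
-/

open Set

/-- Covering dimension at most `n`. -/
def CovDimLE (X : Type*) [TopologicalSpace X] (n : ℕ) : Prop :=
  ∀ U : Set (Set X), U.Finite → (∀ u ∈ U, IsOpen u) → ⋃₀ U = Set.univ →
    ∃ V : Set (Set X), V.Finite ∧ (∀ v ∈ V, IsOpen v) ∧ ⋃₀ V = Set.univ ∧
      (∀ v ∈ V, ∃ u ∈ U, v ⊆ u) ∧ ∀ x : X, {v ∈ V | x ∈ v}.ncard ≤ n + 1

universe u

/-- Unlike `CovDimLE s n`, the dimension of `s` as a subspace, this relative version is
monotone in `s`. -/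
def RelCovDimLE {X : Type u} [TopologicalSpace X] (s : Set X) (n : ℕ) : Prop :=
  ∀ (ι : Type u) [Finite ι] (G : ι → Set X), (∀ i, IsOpen (G i)) → ⋃ i, G i = univ →
    ∃ O : ι → Set X, (∀ i, IsOpen (O i)) ∧ (∀ i, O i ⊆ G i) ∧ s ⊆ ⋃ i, O i ∧
      ∀ x ∈ s, {i | x ∈ O i}.ncard ≤ n + 1

section RelCovDimLE

variable {X : Type u} [TopologicalSpace X] {n : ℕ}

theorem RelCovDimLE.mono {s t : Set X} (ht : RelCovDimLE t n) (hst : s ⊆ t) :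
    RelCovDimLE s n := by
  intro ι _ G hGo hGcov
  obtain ⟨O, hOo, hOG, htO, hOord⟩ := ht ι G hGo hGcov
  exact ⟨O, hOo, hOG, hst.trans htO, fun x hx => hOord x (hst hx)⟩

theorem covDimLE_iff_relCovDimLE_univ : CovDimLE X n ↔ RelCovDimLE (univ : Set X) n := by
  constructor
  · intro h ι _ G hGo hGcov
    obtain ⟨V, hVfin, hVo, hVcov, hVG, hVord⟩ := h (range G) (finite_range G)
      (forall_mem_range.2 hGo) (by rwa [sUnion_range])
    have : ∀ v : V, ∃ i, (v : Set X) ⊆ G i := fun v => by simpa using hVG v v.2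
    choose f hf using this
    have := hVfin.to_subtype
    refine ⟨fun i => ⋃ (v : V) (_ : f v = i), v,
      fun i => isOpen_iUnion fun v => isOpen_iUnion fun _ => hVo v v.2,
      fun i => iUnion₂_subset fun v hv => hv ▸ hf v, fun x _ => ?_, fun x _ => ?_⟩
    · obtain ⟨v, hv, hxv⟩ := hVcov ▸ mem_univ x
      exact mem_iUnion.2 ⟨_, mem_iUnion₂.2 ⟨⟨v, hv⟩, rfl, hxv⟩⟩
    · calc {i | x ∈ ⋃ (v : V) (_ : f v = i), (v : Set X)}.ncard
          ≤ (f '' {v : V | x ∈ (v : Set X)}).ncard := by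
            refine ncard_le_ncard (fun i hi => ?_) (toFinite _)
            obtain ⟨v, rfl, hxv⟩ := mem_iUnion₂.1 hi
            exact mem_image_of_mem f hxv
        _ ≤ {v : V | x ∈ (v : Set X)}.ncard := ncard_image_le (toFinite _)
        _ = {v ∈ V | x ∈ v}.ncard := by
            rw [← ncard_image_of_injective _ Subtype.val_injective]
            congr 1
            ext w
            simp [and_comm]
        _ ≤ n + 1 := hVord x
  · intro h U hUfin hUo hUcov
    have := hUfin.to_subtype
    obtain ⟨W, hWo, hWU, hWcov, hWord⟩ := h U (fun u => u) (fun u => hUo u u.2)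
      (by rw [← sUnion_eq_iUnion, hUcov])
    refine ⟨range W, finite_range W, forall_mem_range.2 hWo,
      by rw [sUnion_range, ← univ_subset_iff]; exact hWcov,
      forall_mem_range.2 fun u => ⟨u, u.2, hWU u⟩, fun x => ?_⟩
    calc {w ∈ range W | x ∈ w}.ncard ≤ (W '' {u | x ∈ W u}).ncard := by
          refine ncard_le_ncard ?_ (toFinite _)
          rintro _ ⟨⟨u, rfl⟩, hx⟩
          exact mem_image_of_mem W hx
      _ ≤ {u | x ∈ W u}.ncard := ncard_image_le (toFinite _)
      _ ≤ n + 1 := hWord x (mem_univ x)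

theorem RelCovDimLE.of_covDimLE {s : Set X} (h : CovDimLE s n) : RelCovDimLE s n := by
  intro ι _ G hGo hGcov
  obtain ⟨W, hWo, hWG, hWcov, hWord⟩ := covDimLE_iff_relCovDimLE_univ.1 h ι
    (fun i => Subtype.val ⁻¹' G i) (fun i => (hGo i).preimage continuous_subtype_val)
    (by rw [← preimage_iUnion, hGcov, preimage_univ])
  choose o ho hoW using fun i => isOpen_induced_iff.1 (hWo i)
  refine ⟨fun i => o i ∩ G i, fun i => (ho i).inter (hGo i), fun i => inter_subset_right,
    fun x hx => ?_, fun x hx => ?_⟩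
  · obtain ⟨i, hi⟩ := mem_iUnion.1 (hWcov (mem_univ ⟨x, hx⟩))
    have hxo : (⟨x, hx⟩ : s) ∈ Subtype.val ⁻¹' o i := (hoW i).symm ▸ hi
    exact mem_iUnion.2 ⟨i, hxo, hWG i hi⟩
  · refine (ncard_le_ncard (fun i hi => ?_) (toFinite _)).trans (hWord ⟨x, hx⟩ (mem_univ _))
    show (⟨x, hx⟩ : s) ∈ W i
    rw [← hoW i]
    exact hi.1

end RelCovDimLE

section Shrinking

variable {X ι : Type u} {τ : Type*} [TopologicalSpace X]

/-- A stage of the transfinite shrinking of the open cover `U` along the sets `F t`. -/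
structure PartialShrinking (F : τ → Set X) (U : ι → Set X) (n : ℕ) where
  carrier : Set τ
  toFun : ι → Set X
  isOpen : ∀ i, IsOpen (toFun i)
  subset : ∀ i, toFun i ⊆ U i
  iUnion_eq : ⋃ i, toFun i = univ
  ncard_le : ∀ t ∈ carrier, ∀ x ∈ F t, {i | x ∈ toFun i}.ncard ≤ n + 1

namespace PartialShrinking

variable {F : τ → Set X} {U : ι → Set X} {n : ℕ}

/-- A later stage changes the cover only on the newly added sets `F t`; together with the local
finiteness of `F`, this keeps intersections along chains open. -/
instance : Preorder (PartialShrinking F U n) where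
  le v w := v.carrier ⊆ w.carrier ∧ (∀ i, w.toFun i ⊆ v.toFun i) ∧
    ∀ i, v.toFun i ⊆ w.toFun i ∪ ⋃ t ∈ w.carrier \ v.carrier, F t
  le_refl v := ⟨subset_rfl, fun _ => subset_rfl, fun _ => subset_union_left⟩
  le_trans u v w huv hvw := by
    refine ⟨huv.1.trans hvw.1, fun i => (hvw.2.1 i).trans (huv.2.1 i), fun i x hx => ?_⟩
    rcases huv.2.2 i hx with hx | hx
    · rcases hvw.2.2 i hx with hx | hx
      · exact Or.inl hx
      · exact Or.inr (biUnion_subset_biUnion_left (sdiff_subset_sdiff_right huv.1) hx)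
    · exact Or.inr (biUnion_subset_biUnion_left (sdiff_subset_sdiff_left hvw.1) hx)

theorem toFun_subset_of_le {v w : PartialShrinking F U n} (h : v ≤ w) (i : ι) :
    w.toFun i ⊆ v.toFun i :=
  h.2.1 i

theorem mem_toFun_of_le {v w : PartialShrinking F U n} (h : v ≤ w) {i : ι} {x : X}
    (hx : x ∈ v.toFun i) (hxF : ∀ t ∈ w.carrier, t ∉ v.carrier → x ∉ F t) :
    x ∈ w.toFun i :=
  (h.2.2 i hx).resolve_right fun hx' => by
    obtain ⟨t, ⟨htw, htv⟩, hxt⟩ := mem_iUnion₂.1 hx'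
    exact hxF t htw htv hxt

def initial (hU : ∀ i, IsOpen (U i)) (hUcov : ⋃ i, U i = univ) : PartialShrinking F U n :=
  ⟨∅, U, hU, fun _ => subset_rfl, hUcov, by simp⟩

theorem exists_le_mem_carrier [Finite ι] (v : PartialShrinking F U n) {t : τ}
    (hvt : t ∉ v.carrier) (htc : IsClosed (F t)) (ht : RelCovDimLE (F t) n) :
    ∃ w, v ≤ w ∧ t ∈ w.carrier := by
  obtain ⟨O, hOo, hOv, hFO, hOord⟩ := ht ι v.toFun v.isOpen v.iUnion_eq
  refine ⟨⟨insert t v.carrier, fun i => v.toFun i ∩ (O i ∪ (F t)ᶜ),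
    fun i => (v.isOpen i).inter ((hOo i).union htc.isOpen_compl),
    fun i => inter_subset_left.trans (v.subset i), ?_, ?_⟩,
    ⟨subset_insert _ _, fun i => inter_subset_left, fun i x hx => ?_⟩, mem_insert _ _⟩
  · refine eq_univ_of_forall fun x => ?_
    by_cases hx : x ∈ F t
    · obtain ⟨i, hi⟩ := mem_iUnion.1 (hFO hx)
      exact mem_iUnion.2 ⟨i, hOv i hi, Or.inl hi⟩
    · obtain ⟨i, hi⟩ := mem_iUnion.1 (v.iUnion_eq ▸ mem_univ x)
      exact mem_iUnion.2 ⟨i, hi, Or.inr hx⟩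
  · rintro s (rfl | hs) x hx
    · exact (ncard_le_ncard (fun i hi => hi.2.resolve_right (not_not.2 hx)) (toFinite _)).trans
        (hOord x hx)
    · exact (ncard_le_ncard (fun i hi => hi.1) (toFinite _)).trans (v.ncard_le s hs x hx)
  · by_cases hxt : x ∈ F t
    · exact Or.inr (mem_biUnion ⟨mem_insert _ _, hvt⟩ hxt)
    · exact Or.inl ⟨hx, Or.inr hxt⟩

theorem isOpen_biInter_toFun (hF : LocallyFinite F) {c : Set (PartialShrinking F U n)}
    (hc : IsChain (· ≤ ·) c) (i : ι) : IsOpen (⋂ v ∈ c, v.toFun i) := by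
  refine isOpen_iff_mem_nhds.2 fun x hx => ?_
  rcases c.eq_empty_or_nonempty with rfl | hne
  · simp
  obtain ⟨N, hN, hNfin⟩ := hF x
  obtain ⟨v₀, hv₀, hv₀N⟩ := DirectedOn.exists_mem_subset_of_finset_subset_biUnion hne
    (hc.directedOn.mono fun _ _ h => h.1)
    (s := (hNfin.inter_of_left (⋃ v ∈ c, v.carrier)).toFinset) (by simp)
  refine Filter.mem_of_superset
    (Filter.inter_mem hN ((v₀.isOpen i).mem_nhds (mem_iInter₂.1 hx v₀ hv₀)))
    fun y ⟨hyN, hy⟩ => mem_iInter₂.2 fun v hv => ?_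
  rcases hc.total hv hv₀ with h | h
  · exact toFun_subset_of_le h i hy
  · -- `F t` meets `N`, so `t` was already added to the carrier by the stage `v₀`
    refine mem_toFun_of_le h hy fun t htv htv₀ hyt => htv₀ (hv₀N ?_)
    simpa using ⟨⟨y, hyt, hyN⟩, v, hv, htv⟩

theorem iUnion_biInter_toFun_eq_univ [Finite ι] {c : Set (PartialShrinking F U n)}
    (hc : IsChain (· ≤ ·) c) (hne : c.Nonempty) : ⋃ i, ⋂ v ∈ c, v.toFun i = univ := by
  refine eq_univ_of_forall fun x => by_contra fun hx => ?_
  simp only [mem_iUnion, mem_iInter, not_exists, not_forall] at hx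
  have := Fintype.ofFinite ι
  obtain ⟨v₀, hv₀, hv₀x⟩ := DirectedOn.exists_mem_subset_of_finset_subset_biUnion
    (f := fun v => {i | x ∉ v.toFun i}) hne
    (hc.directedOn.mono fun v w h i hi hw => hi (toFun_subset_of_le h i hw))
    (s := Finset.univ) fun i _ => by simpa using hx i
  obtain ⟨i, hi⟩ := mem_iUnion.1 (v₀.iUnion_eq ▸ mem_univ x)
  exact hv₀x (Finset.mem_coe.2 (Finset.mem_univ i)) hi

def chainSup (hF : LocallyFinite F) [Finite ι] (c : Set (PartialShrinking F U n))
    (hc : IsChain (· ≤ ·) c) (hne : c.Nonempty) : PartialShrinking F U n where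
  carrier := ⋃ v ∈ c, v.carrier
  toFun i := ⋂ v ∈ c, v.toFun i
  isOpen := isOpen_biInter_toFun hF hc
  subset i := (biInter_subset_of_mem hne.some_mem).trans (hne.some.subset i)
  iUnion_eq := iUnion_biInter_toFun_eq_univ hc hne
  ncard_le t ht x hx := by
    obtain ⟨v, hv, htv⟩ := mem_iUnion₂.1 ht
    refine (ncard_le_ncard (t := {i | x ∈ v.toFun i}) ?_ (toFinite _)).trans
      (v.ncard_le t htv x hx)
    exact fun i (hi : x ∈ ⋂ w ∈ c, w.toFun i) => mem_iInter₂.1 hi v hv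

theorem le_chainSup (hF : LocallyFinite F) [Finite ι] {c : Set (PartialShrinking F U n)}
    (hc : IsChain (· ≤ ·) c) (hne : c.Nonempty) {v : PartialShrinking F U n} (hv : v ∈ c) :
    v ≤ chainSup hF c hc hne := by
  refine ⟨subset_biUnion_of_mem hv, fun i => biInter_subset_of_mem hv,
    fun i x hx => or_iff_not_imp_right.2 fun hxF => mem_iInter₂.2 fun w hw => ?_⟩
  rcases hc.total hv hw with h | h
  · exact mem_toFun_of_le h hx fun t htw htv hxt =>
      hxF (mem_biUnion ⟨mem_iUnion₂.2 ⟨w, hw, htw⟩, htv⟩ hxt)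
  · exact toFun_subset_of_le h i hx

end PartialShrinking

theorem relCovDimLE_univ_of_locallyFinite {n : ℕ} {F : τ → Set X} (hFlf : LocallyFinite F)
    (hFc : ∀ t, IsClosed (F t)) (hFcov : ⋃ t, F t = univ) (hF : ∀ t, RelCovDimLE (F t) n) :
    RelCovDimLE (univ : Set X) n := by
  intro ι _ U hUo hUcov
  have : Nonempty (PartialShrinking F U n) := ⟨.initial hUo hUcov⟩
  obtain ⟨m, hm⟩ := zorn_le_nonempty (α := PartialShrinking F U n) fun c hc hne =>
    ⟨PartialShrinking.chainSup hFlf c hc hne, fun _ => PartialShrinking.le_chainSup hFlf hc hne⟩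
  have hmF : ∀ t, t ∈ m.carrier := fun t => by_contra fun ht => by
    obtain ⟨w, hmw, htw⟩ := m.exists_le_mem_carrier ht (hFc t) (hF t)
    exact ht ((hm hmw).1 htw)
  refine ⟨m.toFun, m.isOpen, m.subset, m.iUnion_eq.symm.subset, fun x _ => ?_⟩
  obtain ⟨t, hxt⟩ := mem_iUnion.1 (hFcov ▸ mem_univ x)
  exact m.ncard_le t (hmF t) x hxt

end Shrinking

/-- In a paracompact space, local covering dimension at most `n` implies covering
dimension at most `n`. -/
theorem stmt_5 {X : Type} [TopologicalSpace X] [ParacompactSpace X] (n : ℕ)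
    (hloc : ∀ x : X, ∃ D : Set X, D ∈ nhds x ∧ IsClosed D ∧ CovDimLE D n) :
    CovDimLE X n := by
  choose D hDx hDc hD using hloc
  obtain ⟨v, -, hvcov, hvlf, hvD⟩ := precise_refinement (fun x => interior (D x))
    (fun _ => isOpen_interior)
    (iUnion_eq_univ_iff.2 fun x => ⟨x, mem_interior_iff_mem_nhds.2 (hDx x)⟩)
  have hclosure_cov : ⋃ x, closure (v x) = univ :=
    eq_univ_of_univ_subset (hvcov ▸ iUnion_mono fun _ => subset_closure)
  have hclosure_D : ∀ x, closure (v x) ⊆ D x :=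
    fun x => closure_minimal ((hvD x).trans interior_subset) (hDc x)
  exact covDimLE_iff_relCovDimLE_univ.2 <|
    relCovDimLE_univ_of_locallyFinite hvlf.closure (fun _ => isClosed_closure) hclosure_cov
      fun x => (RelCovDimLE.of_covDimLE (hD x)).mono (hclosure_D x)
end

section
/- Let X be a compact approximative absolute retract and D an absolute neighborhood retract. Then every continuous map f : X → D is nullhomotopic. -/
/-!
Embed `X` isometrically, by `κ`, as a closed subset `A` of the Banach space `ℓ^∞(ℕ, ℝ)`. Since `D`
is an ANR, `f`, viewed on `A`, extends to an open neighbourhood `V ⊇ A`, and by compactness `V`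
contains an `ε`-thickening of `A`. So if `G : X → X` is `ε`-close to the identity, the segments
from `κ x` to `κ (G x)` lie in `V`, and `f ∘ G` is homotopic to `f`. Since `X` is an AAR, the
inverse `A → X` of `κ` is `ε`-approximated by a map `g` defined on all of `ℓ^∞(ℕ, ℝ)`; then
`G = g ∘ κ` is `ε`-close to the identity and factors through a contractible space, so
`f ≃ f ∘ G` is nullhomotopic.
-/
open Set

/-- Approximative absolute retract. -/
def IsAAR (X : Type*) [MetricSpace X] : Prop :=
  ∀ (Y : Type) [MetricSpace Y] (Z : Set Y), IsClosed Z →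
    ∀ f : C(Z, X), ∀ ε : ℝ, 0 < ε → ∃ g : C(Y, X), ∀ z : Z, dist (f z) (g (z : Y)) < ε


/-- Absolute neighborhood retract. -/
def IsANR (X : Type*) [MetricSpace X] : Prop :=
  ∀ (Y : Type) [MetricSpace Y] (Z : Set Y), IsClosed Z →
    ∀ f : C(Z, X), ∃ (V : Set Y) (_ : IsOpen V) (hZV : Z ⊆ V) (g : C(V, X)),
      ∀ (z : Y) (hz : z ∈ Z), g ⟨z, hZV hz⟩ = f ⟨z, hz⟩

open Metric TopologicalSpace

theorem ContinuousMap.homotopic_of_segment_subset {X E : Type*} [TopologicalSpace X]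
    [AddCommGroup E] [TopologicalSpace E] [IsTopologicalAddGroup E] [Module ℝ E]
    [ContinuousSMul ℝ E] {V : Set E} (u v : C(X, V))
    (h : ∀ x, segment ℝ (u x : E) (v x) ⊆ V) : u.Homotopic v := by
  let H := Homotopy.affine ((⟨Subtype.val, continuous_subtype_val⟩ : C(V, E)).comp u)
    ((⟨Subtype.val, continuous_subtype_val⟩ : C(V, E)).comp v)
  exact ⟨{ toFun := fun p => ⟨H p, h p.2 (by simpa [H] using lineMap_mem_segment ℝ _ _ p.1.2)⟩
           continuous_toFun := H.continuous.subtype_mk _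
           map_zero_left := fun x => Subtype.ext (by simp [H])
           map_one_left := fun x => Subtype.ext (by simp [H]) }⟩

section Kuratowski

variable (X : Type*) [MetricSpace X] [SeparableSpace X]

noncomputable def kuratowskiEmbeddingInv : C(range (kuratowskiEmbedding X), X) :=
  ((kuratowskiEmbedding.isometry X).isometryEquivOnRange.symm.toHomeomorph : C(_, X))

@[simp]
theorem kuratowskiEmbeddingInv_apply (x : X) :
    kuratowskiEmbeddingInv X ⟨kuratowskiEmbedding X x, mem_range_self x⟩ = x :=
  (kuratowskiEmbedding.isometry X).isometryEquivOnRange.symm_apply_apply x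

end Kuratowski

theorem IsANR.homotopic_comp_of_dist_lt {X D : Type} [MetricSpace X] [CompactSpace X]
    [MetricSpace D] (hD : IsANR D) (f : C(X, D)) :
    ∃ ε > 0, ∀ G : C(X, X), (∀ x, dist (G x) x < ε) → (f.comp G).Homotopic f := by
  set κ := kuratowskiEmbedding X
  have hκ : Isometry κ := kuratowskiEmbedding.isometry X
  have hκ_inv (x : X) : kuratowskiEmbeddingInv X ⟨κ x, mem_range_self x⟩ = x :=
    kuratowskiEmbeddingInv_apply X x
  have hA : IsCompact (range κ) := isCompact_range hκ.continuous
  obtain ⟨V, hV, hAV, F, hF⟩ := hD _ _ hA.isClosed (f.comp (kuratowskiEmbeddingInv X))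
  obtain ⟨ε, hε, hεV⟩ := hA.exists_thickening_subset_open hV hAV
  let lift : C(X, X) → C(X, V) := fun G =>
    ⟨fun x => ⟨κ (G x), hAV (mem_range_self _)⟩, (hκ.continuous.comp G.continuous).subtype_mk _⟩
  have hF_lift (G : C(X, X)) : F.comp (lift G) = f.comp G := by
    ext x
    exact (hF _ (mem_range_self (G x))).trans (congrArg f (hκ_inv (G x)))
  refine ⟨ε, hε, fun G hG => ?_⟩
  rw [← hF_lift G, ← f.comp_id, ← hF_lift (.id X)]
  refine (ContinuousMap.Homotopic.refl F).comp
    (ContinuousMap.homotopic_of_segment_subset _ _ fun x => ?_)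
  calc segment ℝ (κ (G x)) (κ x)
      ⊆ ball (κ x) ε := (convex_ball _ _).segment_subset
        (by rw [mem_ball, hκ.dist_eq]; exact hG x)
        (mem_ball_self hε)
    _ ⊆ thickening ε (range κ) := ball_subset_thickening (mem_range_self x) ε
    _ ⊆ V := hεV

theorem IsAAR.exists_nullhomotopic_dist_lt {X : Type} [MetricSpace X] [CompleteSpace X]
    [SeparableSpace X] (hX : IsAAR X) {ε : ℝ} (hε : 0 < ε) :
    ∃ G : C(X, X), G.Nullhomotopic ∧ ∀ x, dist (G x) x < ε := by
  have hκ := kuratowskiEmbedding.isometry X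
  obtain ⟨g, hg⟩ := hX _ _ hκ.isClosedEmbedding.isClosed_range (kuratowskiEmbeddingInv X) ε hε
  refine ⟨g.comp ⟨kuratowskiEmbedding X, hκ.continuous⟩,
    ((id_nullhomotopic _).comp_right g).comp_left _, fun x => ?_⟩
  simpa [dist_comm] using hg ⟨_, mem_range_self x⟩

/-- Every map from a compact AAR into an ANR is nullhomotopic. -/
theorem stmt_17 {X D : Type} [MetricSpace X] [CompactSpace X] [MetricSpace D]
    (hX : IsAAR X) (hD : IsANR D) (f : C(X, D)) :
    ∃ d : D, f.Homotopic (ContinuousMap.const X d) := by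
  obtain ⟨ε, hε, hf⟩ := hD.homotopic_comp_of_dist_lt f
  obtain ⟨G, hG, hGε⟩ := hX.exists_nullhomotopic_dist_lt hε
  obtain ⟨d, hd⟩ := hG.comp_right f
  exact ⟨d, (hf G hGε).symm.trans hd⟩
end
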